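/- Let p be a positive integer, γ > 0, let g, h : ℝ^p → ℝ be convex, and let f : ℝ^p → ℝ be convex and L-smooth with L > 0. Let y* ∈ ℝ^p be a fixed point, i.e., there is x* ∈ ℝ^p such that x* is a proximal point of g at y* with parameter γ and x* is a proximal point of h at 2x* − y* − γ∇f(x*) with parameter γ (so the splitting step from y* is (x*, x*) and G(y*) = 0). Let y ∈ ℝ^p, let (x, z) be a three-operator splitting step from y, and set y⁺ = y − x + z and G(y) = (x − z)/γ. Then ‖y⁺ − y*‖² ≤ ‖y − y*‖² − γ²(1 − γL/2)·‖G(y)‖². -/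

import Mathlib

/-!
The two proximal steps make `(y - x)/γ` a subgradient of `g` at `x` and
`(2x - y - γ∇f x - z)/γ` a subgradient of `h` at `z`, and likewise at the fixed point; monotonicity
of subdifferentials compares the two. The gradient of a convex `L`-smooth function is
`1/L`-cocoercive (Baillon–Haddad), which bounds the cross term `γ⟪∇f x - ∇f x*, z - x*⟫` below by
`-(γL/4)‖x - z‖²`. Expanding `‖y⁺ - y*‖²` and adding these three inequalities gives the claim.
-/

open RealInnerProductSpace

/-- `x` is a proximal point of `φ` at `y` with parameter `γ`:
it minimizes `u ↦ φ u + (1/(2γ)) ‖u - y‖²`. -/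
def IsProxPt {p : ℕ} (γ : ℝ) (φ : EuclideanSpace ℝ (Fin p) → ℝ)
    (y x : EuclideanSpace ℝ (Fin p)) : Prop :=
  ∀ u : EuclideanSpace ℝ (Fin p),
    φ x + (1 / (2 * γ)) * ‖x - y‖ ^ 2 ≤ φ u + (1 / (2 * γ)) * ‖u - y‖ ^ 2

/-- `(x, z)` is a three-operator splitting step from `y`. -/
def IsSplitStep {p : ℕ} (γ : ℝ) (g h f : EuclideanSpace ℝ (Fin p) → ℝ)
    (y x z : EuclideanSpace ℝ (Fin p)) : Prop :=
  IsProxPt γ g y x ∧ IsProxPt γ h ((2 : ℝ) • x - y - γ • gradient f x) z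

/-- `f` is `L`-smooth: differentiable with `L`-Lipschitz gradient. -/
def LSmooth {p : ℕ} (L : ℝ) (f : EuclideanSpace ℝ (Fin p) → ℝ) : Prop :=
  Differentiable ℝ f ∧ ∀ a b : EuclideanSpace ℝ (Fin p),
    ‖gradient f a - gradient f b‖ ≤ L * ‖a - b‖

/-- `u` is a subgradient of `φ` at `x`. -/
def IsSubgradient {p : ℕ} (φ : EuclideanSpace ℝ (Fin p) → ℝ)
    (x u : EuclideanSpace ℝ (Fin p)) : Prop :=
  ∀ w : EuclideanSpace ℝ (Fin p), φ w ≥ φ x + ⟪u, w - x⟫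

open Set Filter Topology

theorem ConvexOn.comp_add_smul {E : Type*} [AddCommGroup E] [Module ℝ E] {f : E → ℝ}
    (hf : ConvexOn ℝ univ f) (a v : E) :
    ConvexOn ℝ univ (fun s : ℝ ↦ f (a + s • v)) := by
  refine ⟨convex_univ, fun x _ y _ α β hα hβ hαβ ↦ ?_⟩
  convert hf.2 (mem_univ (a + x • v)) (mem_univ (a + y • v)) hα hβ hαβ using 2
  simp only [smul_eq_mul]
  linear_combination (norm := module) (-1 : ℝ) • hαβ • a

section InnerProduct

variable {E : Type*} [NormedAddCommGroup E] [InnerProductSpace ℝ E]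

theorem neg_mul_sq_le_inner_of_sq_le_inner {d a b : E} {L : ℝ} (hL : 0 < L)
    (h : ‖d‖ ^ 2 ≤ L * ⟪d, a⟫) : -(L / 4) * ‖a - b‖ ^ 2 ≤ ⟪d, b⟫ := by
  have hcs := real_inner_le_norm d (a - b)
  rw [inner_sub_right] at hcs
  nlinarith [sq_nonneg (‖d‖ - L / 2 * ‖a - b‖), mul_le_mul_of_nonneg_left hcs hL.le]

theorem norm_sub_add_sq_le {w a b d : E} {γ L : ℝ} (hγ : 0 ≤ γ) (hA : 0 ≤ ⟪w - a, a⟫)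
    (hB : 0 ≤ ⟪(2 : ℝ) • a - w - γ • d - b, b⟫) (hd : -(L / 4) * ‖a - b‖ ^ 2 ≤ ⟪d, b⟫) :
    ‖w - a + b‖ ^ 2 ≤ ‖w‖ ^ 2 - (1 - γ * L / 2) * ‖a - b‖ ^ 2 := by
  rw [show w - a + b = w - (a - b) by abel, norm_sub_sq_real, norm_sub_sq_real] at *
  simp only [inner_sub_left, inner_sub_right, inner_smul_left, real_inner_self_eq_norm_sq,
    RCLike.conj_to_real, real_inner_comm a w, real_inner_comm b w] at hA hB ⊢
  linarith [mul_le_mul_of_nonneg_left hd hγ]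

section Gradient

variable [CompleteSpace E] {f : E → ℝ} {L : ℝ}

theorem hasDerivAt_comp_add_smul {a v : E} {t : ℝ} (hf : DifferentiableAt ℝ f (a + t • v)) :
    HasDerivAt (fun s : ℝ ↦ f (a + s • v)) ⟪gradient f (a + t • v), v⟫ t := by
  have hline : HasDerivAt (fun s : ℝ ↦ a + s • v) v t := by
    simpa using ((hasDerivAt_id t).smul_const v).const_add a
  exact (hasGradientAt_iff_hasFDerivAt.mp hf.hasGradientAt).comp_hasDerivAt t hline

theorem ConvexOn.add_inner_gradient_le (hf : ConvexOn ℝ univ f) {a : E}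
    (hd : DifferentiableAt ℝ f a) (w : E) : f a + ⟪gradient f a, w - a⟫ ≤ f w := by
  have hderiv := hasDerivAt_comp_add_smul (t := 0) (v := w - a) (by simpa using hd)
  have := (hf.comp_add_smul a (w - a)).le_slope_of_hasDerivAt (mem_univ 0) (mem_univ 1)
    zero_lt_one hderiv
  simp only [slope_def_field, zero_smul, add_zero, one_smul, add_sub_cancel, sub_zero,
    div_one] at this
  linarith

theorem le_add_inner_gradient_add_sq (hd : Differentiable ℝ f)
    (hlip : ∀ a b : E, ‖gradient f a - gradient f b‖ ≤ L * ‖a - b‖) (a w : E) :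
    f w ≤ f a + ⟪gradient f a, w - a⟫ + L / 2 * ‖w - a‖ ^ 2 := by
  set v := w - a
  set ψ : ℝ → ℝ := fun s ↦ L / 2 * s ^ 2 * ‖v‖ ^ 2 + s * ⟪gradient f a, v⟫ - f (a + s • v)
  have hderiv (t : ℝ) : HasDerivAt ψ
      (L * t * ‖v‖ ^ 2 + ⟪gradient f a, v⟫ - ⟪gradient f (a + t • v), v⟫) t := by
    have hq := ((hasDerivAt_pow 2 t).const_mul (L / 2)).mul_const (‖v‖ ^ 2)
    have hl := (hasDerivAt_id t).mul_const ⟪gradient f a, v⟫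
    refine ((hq.add hl).sub (hasDerivAt_comp_add_smul (hd _))).congr_deriv ?_
    simp only [one_mul, Nat.cast_ofNat]
    ring
  have hmono : MonotoneOn ψ (Icc 0 1) := by
    refine monotoneOn_of_deriv_nonneg (convex_Icc 0 1)
      (HasDerivAt.continuousOn fun t _ ↦ hderiv t)
      (fun t _ ↦ (hderiv t).differentiableAt.differentiableWithinAt) fun t ht ↦ ?_
    rw [interior_Icc] at ht
    have hdist : ‖a + t • v - a‖ = t * ‖v‖ := by
      rw [add_sub_cancel_left, norm_smul, Real.norm_of_nonneg ht.1.le]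
    have hcs := real_inner_le_norm (gradient f (a + t • v) - gradient f a) v
    have hgrad := mul_le_mul_of_nonneg_right (hdist ▸ hlip (a + t • v) a) (norm_nonneg v)
    rw [inner_sub_left] at hcs
    rw [(hderiv t).deriv]
    nlinarith
  have := hmono (left_mem_Icc.mpr zero_le_one) (right_mem_Icc.mpr zero_le_one) zero_le_one
  simp only [ψ, v, zero_smul, add_zero, one_smul, add_sub_cancel] at this
  linarith

theorem ConvexOn.add_inner_gradient_add_sq_norm_le (hf : ConvexOn ℝ univ f)
    (hd : Differentiable ℝ f) (hL : 0 < L)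
    (hlip : ∀ a b : E, ‖gradient f a - gradient f b‖ ≤ L * ‖a - b‖) (a b : E) :
    f a + ⟪gradient f a, b - a⟫ + 1 / (2 * L) * ‖gradient f b - gradient f a‖ ^ 2 ≤ f b := by
  set Δ := gradient f b - gradient f a
  -- `c` minimises the quadratic upper bound at `b` of `u ↦ f u - ⟪∇f a, u⟫`, which is least at `a`
  set c := b - L⁻¹ • Δ
  have hlower := hf.add_inner_gradient_le (hd a) c
  have hupper := le_add_inner_gradient_add_sq hd hlip b c
  have hca : c - a = (b - a) - L⁻¹ • Δ := by module
  have hcb : c - b = -(L⁻¹ • Δ) := by module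
  rw [hca, inner_sub_right, real_inner_smul_right] at hlower
  rw [hcb, inner_neg_right, real_inner_smul_right, norm_neg, norm_smul,
    Real.norm_of_nonneg (inv_nonneg.mpr hL.le)] at hupper
  have hΔ : ⟪gradient f b, Δ⟫ - ⟪gradient f a, Δ⟫ = ‖Δ‖ ^ 2 := by
    rw [← inner_sub_left, real_inner_self_eq_norm_sq]
  field_simp at hlower hupper ⊢
  nlinarith

theorem ConvexOn.sq_norm_gradient_sub_le_inner (hf : ConvexOn ℝ univ f)
    (hd : Differentiable ℝ f) (hL : 0 < L)
    (hlip : ∀ a b : E, ‖gradient f a - gradient f b‖ ≤ L * ‖a - b‖) (a b : E) :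
    ‖gradient f a - gradient f b‖ ^ 2 ≤ L * ⟪gradient f a - gradient f b, a - b⟫ := by
  have hab := hf.add_inner_gradient_add_sq_norm_le hd hL hlip a b
  have hba := hf.add_inner_gradient_add_sq_norm_le hd hL hlip b a
  have hinner : ⟪gradient f a - gradient f b, a - b⟫
      = -⟪gradient f a, b - a⟫ - ⟪gradient f b, a - b⟫ := by
    rw [inner_sub_left, ← neg_sub a b, inner_neg_right]; ring
  rw [hinner]
  rw [norm_sub_rev] at hab
  field_simp at hab hba
  linarith

end Gradient

end InnerProduct

theorem le_of_forall_le_add_mul {a b c : ℝ} (h : ∀ t : ℝ, 0 < t → t ≤ 1 → a ≤ b + t * c) :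
    a ≤ b := by
  have hlim : Tendsto (fun t : ℝ ↦ b + t * c) (𝓝[>] 0) (𝓝 b) := by
    have hcont : Continuous (fun t : ℝ ↦ b + t * c) := by fun_prop
    simpa using (hcont.tendsto 0).mono_left nhdsWithin_le_nhds
  refine ge_of_tendsto hlim ?_
  filter_upwards [Ioc_mem_nhdsGT zero_lt_one] with t ht using h t ht.1 ht.2

section Prox

variable {p : ℕ} {γ : ℝ} {φ : EuclideanSpace ℝ (Fin p) → ℝ}

theorem IsProxPt.isSubgradient (hγ : 0 < γ) (hφ : ConvexOn ℝ univ φ)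
    {y x : EuclideanSpace ℝ (Fin p)} (hx : IsProxPt γ φ y x) :
    IsSubgradient φ x (γ⁻¹ • (y - x)) := by
  intro w
  rw [ge_iff_le, real_inner_smul_left]
  refine le_of_forall_le_add_mul (c := ‖w - x‖ ^ 2 / (2 * γ)) fun t ht0 ht1 ↦ ?_
  have hconv : φ (x + t • (w - x)) ≤ (1 - t) * φ x + t * φ w := by
    have hseg : (1 - t) • x + t • w = x + t • (w - x) := by module
    simpa only [hseg, smul_eq_mul] using
      hφ.2 (mem_univ x) (mem_univ w) (sub_nonneg.2 ht1) ht0.le (sub_add_cancel 1 t)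
  have hnorm : ‖x + t • (w - x) - y‖ ^ 2
      = ‖x - y‖ ^ 2 - 2 * t * ⟪y - x, w - x⟫ + t ^ 2 * ‖w - x‖ ^ 2 := by
    rw [show x + t • (w - x) - y = -(y - x) + t • (w - x) by abel, norm_add_sq_real,
      norm_neg, inner_neg_left, real_inner_smul_right, norm_smul, Real.norm_of_nonneg ht0.le,
      norm_sub_rev y x]
    ring
  have hprox := hx (x + t • (w - x))
  rw [hnorm] at hprox
  suffices t * (φ x + γ⁻¹ * ⟪y - x, w - x⟫) ≤ t * (φ w + t * (‖w - x‖ ^ 2 / (2 * γ))) from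
    le_of_mul_le_mul_left this ht0
  field_simp at hprox ⊢
  nlinarith

theorem IsSubgradient.inner_sub_nonneg {x x' u u' : EuclideanSpace ℝ (Fin p)}
    (hu : IsSubgradient φ x u) (hu' : IsSubgradient φ x' u') : 0 ≤ ⟪u - u', x - x'⟫ := by
  have h := hu x'
  have h' := hu' x
  rw [← neg_sub x x', inner_neg_right] at h
  rw [inner_sub_left]
  linarith

theorem IsProxPt.inner_sub_nonneg (hγ : 0 < γ) (hφ : ConvexOn ℝ univ φ)
    {y y' x x' : EuclideanSpace ℝ (Fin p)} (hx : IsProxPt γ φ y x) (hx' : IsProxPt γ φ y' x') :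
    0 ≤ ⟪(y - y') - (x - x'), x - x'⟫ := by
  have h := (hx.isSubgradient hγ hφ).inner_sub_nonneg (hx'.isSubgradient hγ hφ)
  rwa [← smul_sub, real_inner_smul_left, mul_nonneg_iff_of_pos_left (inv_pos.2 hγ),
    sub_sub_sub_comm] at h

end Prox

theorem stmt_3_general (p : ℕ) (γ : ℝ) (hγ : 0 < γ) (L : ℝ) (hL : 0 < L)
    (g h f : EuclideanSpace ℝ (Fin p) → ℝ)
    (hg : ConvexOn ℝ Set.univ g) (hh : ConvexOn ℝ Set.univ h)
    (hf : ConvexOn ℝ Set.univ f) (hfL : LSmooth L f)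
    (ystar xstar : EuclideanSpace ℝ (Fin p))
    (hfix₁ : IsProxPt γ g ystar xstar)
    (hfix₂ : IsProxPt γ h ((2 : ℝ) • xstar - ystar - γ • gradient f xstar) xstar)
    (y x z yplus : EuclideanSpace ℝ (Fin p))
    (hstep : IsSplitStep γ g h f y x z)
    (hyplus : yplus = y - x + z) :
    ‖yplus - ystar‖ ^ 2 ≤
      ‖y - ystar‖ ^ 2 - γ ^ 2 * (1 - γ * L / 2) * ‖γ⁻¹ • (x - z)‖ ^ 2 := by
  obtain ⟨hdf, hlip⟩ := hfL
  obtain ⟨hx, hz⟩ := hstep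
  have hA := hx.inner_sub_nonneg hγ hg hfix₁
  have hB := hz.inner_sub_nonneg hγ hh hfix₂
  have hD := neg_mul_sq_le_inner_of_sq_le_inner (b := z - xstar) hL
    (hf.sq_norm_gradient_sub_le_inner hdf hL hlip x xstar)
  have key := norm_sub_add_sq_le hγ.le hA (by convert hB using 3; module) hD
  calc ‖yplus - ystar‖ ^ 2 = ‖(y - ystar) - (x - xstar) + (z - xstar)‖ ^ 2 := by
        rw [hyplus]; congr 2; abel
    _ ≤ ‖y - ystar‖ ^ 2 - (1 - γ * L / 2) * ‖(x - xstar) - (z - xstar)‖ ^ 2 := key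
    _ = ‖y - ystar‖ ^ 2 - γ ^ 2 * (1 - γ * L / 2) * ‖γ⁻¹ • (x - z)‖ ^ 2 := by
        rw [sub_sub_sub_cancel_right, norm_smul, Real.norm_of_nonneg (inv_nonneg.2 hγ.le)]
        field_simp

/-- decreasing distance to a fixed point. -/
theorem stmt_3 (p : ℕ) (hp : 0 < p) (γ : ℝ) (hγ : 0 < γ) (L : ℝ) (hL : 0 < L)
    (g h f : EuclideanSpace ℝ (Fin p) → ℝ)
    (hg : ConvexOn ℝ Set.univ g) (hh : ConvexOn ℝ Set.univ h)
    (hf : ConvexOn ℝ Set.univ f) (hfL : LSmooth L f)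
    (ystar xstar : EuclideanSpace ℝ (Fin p))
    (hfix₁ : IsProxPt γ g ystar xstar)
    (hfix₂ : IsProxPt γ h ((2 : ℝ) • xstar - ystar - γ • gradient f xstar) xstar)
    (y x z yplus : EuclideanSpace ℝ (Fin p))
    (hstep : IsSplitStep γ g h f y x z)
    (hyplus : yplus = y - x + z) :
    ‖yplus - ystar‖ ^ 2 ≤
      ‖y - ystar‖ ^ 2 - γ ^ 2 * (1 - γ * L / 2) * ‖γ⁻¹ • (x - z)‖ ^ 2 :=
  stmt_3_general p γ hγ L hL g h f hg hh hf hfL ystar xstar hfix₁ hfix₂ y x z yplus hstep hyplus
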